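/- arXiv:2305.12558 — 3 statements merged into one kernel-verified Lean document; each statement's English description precedes it below -/
import Mathlib

section
/- If w ∈ S_n is a dominant permutation, then the Grothendieck polynomial G_w equals the monomial ∏_{(i,j) ∈ D(w)} x_i; in particular G_w is a monomial of degree |D(w)| = |λ(w)| = ℓ(w). -/
open MvPolynomial

open MvPolynomial

/-- Coxeter length: the number of inversions of `w`. -/
def invLen {n : ℕ} (w : Equiv.Perm (Fin n)) : ℕ :=
  (Finset.univ.filter fun p : Fin n × Fin n => p.1 < p.2 ∧ w p.2 < w p.1).card

/-- `G : w ↦ G_w` is the family of Grothendieck polynomials: `G_{w₀} = ∏ xᵢ^{n-i}` for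
the longest element `w₀`, and whenever `ℓ(w sᵢ) = ℓ(w) - 1`, `G_{w sᵢ} = πᵢ(G_w)` where
`πᵢ(f) = ∂ᵢ((1 - x_{i+1}) f)` and `∂ᵢ(f) = (f - sᵢ f)/(xᵢ - x_{i+1})`; the divided
difference recursion is encoded by clearing the denominator `xᵢ - x_{i+1}`. -/
def IsGrothendieckFamily (n : ℕ) (G : Equiv.Perm (Fin n) → MvPolynomial (Fin n) ℤ) : Prop :=
  G Fin.revPerm = (∏ i : Fin n, (X i : MvPolynomial (Fin n) ℤ) ^ (n - 1 - (i : ℕ))) ∧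
  ∀ (w : Equiv.Perm (Fin n)) (i : Fin n) (hi : (i : ℕ) + 1 < n),
    invLen (w * Equiv.swap i ⟨(i : ℕ) + 1, hi⟩) + 1 = invLen w →
    (X i - X ⟨(i : ℕ) + 1, hi⟩) * G (w * Equiv.swap i ⟨(i : ℕ) + 1, hi⟩)
      = (1 - X ⟨(i : ℕ) + 1, hi⟩) * G w
        - rename (⇑(Equiv.swap i ⟨(i : ℕ) + 1, hi⟩)) ((1 - X ⟨(i : ℕ) + 1, hi⟩) * G w)

/-- The Rothe diagram of `w` (0-based): boxes `(i,j)` with `j < w i` and `i < w⁻¹ j`. -/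
def rotheDiagram {n : ℕ} (w : Equiv.Perm (Fin n)) : Finset (Fin n × Fin n) :=
  Finset.univ.filter fun p => p.2 < w p.1 ∧ p.1 < w⁻¹ p.2

/-- The essential set `E(w)`. -/
def essentialSet {n : ℕ} (w : Equiv.Perm (Fin n)) : Finset (Fin n × Fin n) :=
  (rotheDiagram w).filter fun p =>
    (∀ q ∈ rotheDiagram w, ¬(q.1 = p.1 ∧ (q.2 : ℕ) = (p.2 : ℕ) + 1)) ∧
    (∀ q ∈ rotheDiagram w, ¬((q.1 : ℕ) = (p.1 : ℕ) + 1 ∧ q.2 = p.2))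

/-- The effective region `λ(w)`: all boxes weakly northwest of some essential set box. -/
def effRegion {n : ℕ} (w : Equiv.Perm (Fin n)) : Finset (Fin n × Fin n) :=
  Finset.univ.filter fun p => ∃ q ∈ essentialSet w, p.1 ≤ q.1 ∧ p.2 ≤ q.2

/-- `w` is dominant if its Rothe diagram equals its effective region. -/
def IsDominant {n : ℕ} (w : Equiv.Perm (Fin n)) : Prop :=
  rotheDiagram w = effRegion w


/-!
Dominance makes the Rothe diagram a lower set of `Fin n × Fin n`; we induct downward on `ℓ(w)`.
If `w` has no ascent it is `w₀`, whose diagram is the staircase. Otherwise, at the first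
ascent `i` the value `w i` is a prefix minimum, so rows `i` and `i + 1` of `D(w)` are both
`{j | j < w i}` and `D(w sᵢ) = D(w) ∪ {(i, w i)}` is again a lower set. Inductively
`G_{w sᵢ} = xᵢ M` with `M = ∏_{D(w)} x` symmetric in `xᵢ, xᵢ₊₁`, and `πᵢ (xᵢ M) = M`.
-/

open Finset

section RotheDiagram

variable {n : ℕ} {w : Equiv.Perm (Fin n)}

lemma mem_rotheDiagram {p : Fin n × Fin n} :
    p ∈ rotheDiagram w ↔ p.2 < w p.1 ∧ p.1 < w⁻¹ p.2 := by
  simp [rotheDiagram]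

lemma rotheDiagram_eq_map_inversions (w : Equiv.Perm (Fin n)) :
    rotheDiagram w = (univ.filter fun p : Fin n × Fin n => p.1 < p.2 ∧ w p.2 < w p.1).map
      ((Equiv.refl _).prodCongr w).toEmbedding := by
  ext ⟨a, b⟩
  simp [mem_rotheDiagram, and_comm]

lemma card_rotheDiagram (w : Equiv.Perm (Fin n)) : #(rotheDiagram w) = invLen w := by
  rw [rotheDiagram_eq_map_inversions, card_map, invLen]

lemma prod_rotheDiagram_revPerm :
    ∏ p ∈ rotheDiagram (Fin.revPerm : Equiv.Perm (Fin n)), (X p.1 : MvPolynomial (Fin n) ℤ)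
      = ∏ i : Fin n, X i ^ (n - 1 - (i : ℕ)) := by
  rw [rotheDiagram_eq_map_inversions, prod_map]
  simp only [Fin.revPerm_apply, Fin.rev_lt_rev, and_self, prod_filter, Fintype.prod_prod_type]
  refine prod_congr rfl fun i _ => ?_
  simp only [Equiv.coe_toEmbedding, Equiv.prodCongr_apply, Equiv.coe_refl, Prod.map_fst, id_eq]
  rw [← prod_filter, prod_const, filter_lt_eq_Ioi, Fin.card_Ioi]

lemma isLowerSet_rotheDiagram_of_isDominant (hw : IsDominant w) :
    IsLowerSet (rotheDiagram w : Set (Fin n × Fin n)) := by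
  intro p q hqp hp
  rw [hw, mem_coe, effRegion, mem_filter_univ] at hp ⊢
  obtain ⟨r, hr, h1, h2⟩ := hp
  exact ⟨r, hr, hqp.1.trans h1, hqp.2.trans h2⟩

lemma eq_revPerm_of_strictAnti (hw : StrictAnti w) : w = Fin.revPerm := by
  have : w ∘ Fin.rev = id := (StrictAnti.comp hw Fin.rev_strictAnti).eq_id
  exact Equiv.ext fun a => by simpa using congrFun this a.rev

lemma exists_ascent_of_not_strictAnti (hw : ¬StrictAnti w) :
    ∃ i j : Fin n, (j : ℕ) = i + 1 ∧ (∀ a < i, w i < w a) ∧ w i < w j := by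
  have hne : {c : Fin n | ∃ a < c, w a < w c}.Nonempty := by
    simp only [StrictAnti, not_forall, not_lt] at hw
    obtain ⟨a, c, hac, hle⟩ := hw
    exact ⟨c, a, hac, hle.lt_of_ne (w.injective.ne hac.ne)⟩
  -- `j` is the first position holding a value larger than an earlier one, and `i = j - 1`.
  obtain ⟨j, ⟨a, haj, hwaj⟩, hmin⟩ := wellFounded_lt.has_min _ hne
  obtain ⟨i, hij⟩ : ∃ i : Fin n, (j : ℕ) = i + 1 :=
    ⟨⟨j - 1, by omega⟩, by have := Fin.lt_def.mp haj; dsimp only; omega⟩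
  have hi : ∀ b < i, w i < w b := fun b hb =>
    (le_of_not_gt fun h => hmin i ⟨b, hb, h⟩ (Fin.lt_def.mpr (by omega))).lt_of_ne
      (w.injective.ne (ne_of_gt hb))
  refine ⟨i, j, hij, hi, ?_⟩
  rcases (Fin.le_def.mpr (by have := Fin.lt_def.mp haj; omega) : a ≤ i).lt_or_eq with ha | rfl
  · exact (hi a ha).trans hwaj
  · exact hwaj

end RotheDiagram

section AdjacentTransposition

variable {n : ℕ} {w : Equiv.Perm (Fin n)} {i j : Fin n}

lemma lt_swap_iff_swap_lt (hij : (j : ℕ) = i + 1) {a c : Fin n} (hac : a ≠ c) :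
    a < Equiv.swap i j c ↔ Equiv.swap i j a < c := by
  rw [Fin.ne_iff_vne] at hac
  rw [Equiv.swap_apply_def, Equiv.swap_apply_def]
  split_ifs <;> simp only [Fin.lt_def, Fin.ext_iff] at * <;> omega

lemma mem_rotheDiagram_mul_swap (hij : (j : ℕ) = i + 1) (hasc : w i < w j)
    {p : Fin n × Fin n} :
    p ∈ rotheDiagram (w * Equiv.swap i j) ↔
      p = (i, w i) ∨ (Equiv.swap i j p.1, p.2) ∈ rotheDiagram w := by
  obtain ⟨a, b⟩ := p
  simp only [mem_rotheDiagram, Equiv.Perm.mul_apply, mul_inv_rev, Equiv.swap_inv, Prod.mk.injEq]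
  by_cases hb : w⁻¹ b = a
  · obtain rfl : b = w a := by rw [← hb]; exact (w.apply_symm_apply b).symm
    rw [show w⁻¹ (w a) = a from w.symm_apply_apply a]
    by_cases hai : a = i
    · subst hai
      simp [Equiv.swap_apply_left, hasc, Fin.lt_def, hij]
    by_cases haj : a = j
    · subst haj
      simp [hasc.not_gt, hai, Equiv.swap_apply_right]
    · simp [Equiv.swap_apply_of_ne_of_ne hai haj, hai]
  · have hpi : ¬(a = i ∧ b = w i) := by
      rintro ⟨rfl, rfl⟩
      exact hb (w.symm_apply_apply a)
    rw [lt_swap_iff_swap_lt hij (Ne.symm hb)]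
    tauto

lemma lt_inv_apply_of_lt (hij : (j : ℕ) = i + 1) (hmin : ∀ a < i, w i < w a)
    (hasc : w i < w j) {b : Fin n} (hb : b < w i) : j < w⁻¹ b := by
  by_contra! h
  have hc : w (w⁻¹ b) = b := w.apply_symm_apply b
  rcases lt_trichotomy (w⁻¹ b) i with hlt | heq | hgt
  · exact (hmin _ hlt).not_gt (by rwa [hc])
  · exact hb.ne (by rw [← hc, heq])
  · obtain rfl : w⁻¹ b = j := Fin.ext (by rw [Fin.lt_def] at hgt; rw [Fin.le_def] at h; omega)
    exact hasc.not_gt (by rwa [hc])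

lemma mem_rotheDiagram_of_ascent (hw : IsLowerSet (rotheDiagram w : Set (Fin n × Fin n)))
    (hij : (j : ℕ) = i + 1) (hmin : ∀ a < i, w i < w a) (hasc : w i < w j)
    {a b : Fin n} (ha : a = i ∨ a = j) : (a, b) ∈ rotheDiagram w ↔ b < w i := by
  have hij' : i < j := Fin.lt_def.mpr (by omega)
  constructor
  · intro hab
    rcases ha with rfl | rfl
    · exact (mem_rotheDiagram.mp hab).1
    by_contra! hb
    have hwi : (a, w i) ∈ rotheDiagram w :=
      hw (show (a, w i) ≤ (a, b) from ⟨le_rfl, hb⟩) hab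
    exact hij'.not_gt (by simpa using (mem_rotheDiagram.mp hwi).2)
  · intro hb
    refine mem_rotheDiagram.mpr ⟨?_, ?_⟩
    · rcases ha with rfl | rfl
      exacts [hb, hb.trans hasc]
    · have : a ≤ j := by rcases ha with rfl | rfl <;> [exact hij'.le; exact le_rfl]
      exact this.trans_lt (lt_inv_apply_of_lt hij hmin hasc hb)

lemma swap_mem_rotheDiagram_iff (hw : IsLowerSet (rotheDiagram w : Set (Fin n × Fin n)))
    (hij : (j : ℕ) = i + 1) (hmin : ∀ a < i, w i < w a) (hasc : w i < w j)
    (p : Fin n × Fin n) :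
    (Equiv.swap i j p.1, p.2) ∈ rotheDiagram w ↔ p ∈ rotheDiagram w := by
  obtain ⟨a, b⟩ := p
  by_cases ha : a = i ∨ a = j
  · rw [mem_rotheDiagram_of_ascent hw hij hmin hasc ha,
      mem_rotheDiagram_of_ascent hw hij hmin hasc]
    rcases ha with rfl | rfl <;> simp
  · push Not at ha
    rw [Equiv.swap_apply_of_ne_of_ne ha.1 ha.2]

lemma rotheDiagram_mul_swap_of_isLowerSet
    (hw : IsLowerSet (rotheDiagram w : Set (Fin n × Fin n)))
    (hij : (j : ℕ) = i + 1) (hmin : ∀ a < i, w i < w a) (hasc : w i < w j) :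
    rotheDiagram (w * Equiv.swap i j) = insert (i, w i) (rotheDiagram w) := by
  ext p
  rw [mem_rotheDiagram_mul_swap hij hasc, swap_mem_rotheDiagram_iff hw hij hmin hasc, mem_insert]

lemma isLowerSet_rotheDiagram_mul_swap
    (hw : IsLowerSet (rotheDiagram w : Set (Fin n × Fin n)))
    (hij : (j : ℕ) = i + 1) (hmin : ∀ a < i, w i < w a) (hasc : w i < w j) :
    IsLowerSet (rotheDiagram (w * Equiv.swap i j) : Set (Fin n × Fin n)) := by
  rw [rotheDiagram_mul_swap_of_isLowerSet hw hij hmin hasc, coe_insert]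
  rintro p ⟨a, b⟩ ⟨ha, hb⟩ (rfl | hp)
  · dsimp only at ha hb
    obtain hb | rfl := hb.lt_or_eq
    · have hib : (i, b) ∈ rotheDiagram w :=
        (mem_rotheDiagram_of_ascent hw hij hmin hasc (.inl rfl)).mpr hb
      exact Or.inr (hw (show (a, b) ≤ (i, b) from ⟨ha, le_rfl⟩) hib)
    · obtain ha | rfl := ha.lt_or_eq
      · exact Or.inr (mem_rotheDiagram.mpr ⟨hmin a ha, by simpa using ha⟩)
      · exact Or.inl rfl
  · exact Or.inr (hw ⟨ha, hb⟩ hp)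

end AdjacentTransposition

section Polynomial

variable {σ R : Type*}

lemma rename_prod_X_fst {τ : Type*} [CommSemiring R] (e : σ ≃ σ) {s : Finset (σ × τ)}
    (hs : ∀ p, (e p.1, p.2) ∈ s ↔ p ∈ s) :
    rename e (∏ p ∈ s, (X p.1 : MvPolynomial σ R)) = ∏ p ∈ s, X p.1 := by
  rw [map_prod]
  simp only [rename_X]
  exact prod_equiv (e.prodCongr (Equiv.refl τ)) (fun p => (hs p).symm) fun _ _ => rfl

lemma totalDegree_prod_X [CommRing R] [IsDomain R] {ι : Type*} (s : Finset ι) (f : ι → σ) :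
    (∏ a ∈ s, (X (f a) : MvPolynomial σ R)).totalDegree = #s := by
  have h := IsHomogeneous.prod s (fun a => (X (f a) : MvPolynomial σ R)) (fun _ => 1)
    fun a _ => isHomogeneous_X R (f a)
  rw [h.totalDegree (prod_ne_zero_iff.mpr fun a _ => X_ne_zero (f a)), sum_const, smul_eq_mul,
    mul_one]

lemma eq_of_isobaricDivDiff_X_mul [CommRing R] [IsDomain R] [DecidableEq σ] {i j : σ}
    (hij : i ≠ j) {g M : MvPolynomial σ R} (hM : rename (Equiv.swap i j) M = M)
    (h : (X i - X j) * g
      = (1 - X j) * (X i * M) - rename (Equiv.swap i j) ((1 - X j) * (X i * M))) :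
    g = M := by
  have hXij : (X i - X j : MvPolynomial σ R) ≠ 0 := sub_ne_zero.mpr (X_injective.ne hij)
  refine mul_left_cancel₀ hXij (h.trans ?_)
  simp only [map_mul, map_sub, map_one, rename_X, Equiv.swap_apply_left, Equiv.swap_apply_right, hM]
  ring

end Polynomial

lemma invLen_le {n : ℕ} (w : Equiv.Perm (Fin n)) : invLen w ≤ n * n := by
  rw [invLen]
  exact (card_filter_le _ _).trans (by simp)

theorem IsGrothendieckFamily.eq_prod_rotheDiagram {n : ℕ}
    {G : Equiv.Perm (Fin n) → MvPolynomial (Fin n) ℤ} (hG : IsGrothendieckFamily n G)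
    (w : Equiv.Perm (Fin n)) (hw : IsLowerSet (rotheDiagram w : Set (Fin n × Fin n))) :
    G w = ∏ p ∈ rotheDiagram w, X p.1 := by
  by_cases hanti : StrictAnti w
  · rw [eq_revPerm_of_strictAnti hanti, hG.1, prod_rotheDiagram_revPerm]
  obtain ⟨i, j, hij, hmin, hasc⟩ := exists_ascent_of_not_strictAnti hanti
  have hD := rotheDiagram_mul_swap_of_isLowerSet hw hij hmin hasc
  have hnotmem : (i, w i) ∉ rotheDiagram w := by simp [mem_rotheDiagram]
  have hlen : invLen (w * Equiv.swap i j) = invLen w + 1 := by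
    rw [← card_rotheDiagram, ← card_rotheDiagram, hD, card_insert_of_notMem hnotmem]
  have hu := hG.eq_prod_rotheDiagram (w * Equiv.swap i j)
    (isLowerSet_rotheDiagram_mul_swap hw hij hmin hasc)
  have hi : (i : ℕ) + 1 < n := hij ▸ j.isLt
  have hrec := hG.2 (w * Equiv.swap i j) i hi
  rw [show (⟨i + 1, hi⟩ : Fin n) = j from Fin.ext hij.symm, Equiv.mul_swap_mul_self,
    hlen] at hrec
  rw [hu, hD, prod_insert hnotmem] at hrec
  exact eq_of_isobaricDivDiff_X_mul (Fin.ne_of_lt (Fin.lt_def.mpr (by omega)))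
    (rename_prod_X_fst _ (swap_mem_rotheDiagram_iff hw hij hmin hasc)) (hrec rfl)
termination_by n * n - invLen w
decreasing_by have := invLen_le (w * Equiv.swap i j); omega

/-- If `w ∈ S_n` is dominant, then `G_w = ∏_{(i,j) ∈ D(w)} xᵢ`; in particular `G_w` is
a monomial of degree `|D(w)| = |λ(w)| = ℓ(w)`. -/
theorem grothendieck_of_dominant (n : ℕ)
    (G : Equiv.Perm (Fin n) → MvPolynomial (Fin n) ℤ) (hG : IsGrothendieckFamily n G)
    (w : Equiv.Perm (Fin n)) (hw : IsDominant w) :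
    G w = (∏ p ∈ rotheDiagram w, (X p.1 : MvPolynomial (Fin n) ℤ)) ∧
    (rotheDiagram w).card = (effRegion w).card ∧
    (effRegion w).card = invLen w ∧
    (G w).totalDegree = invLen w := by
  have hGw := hG.eq_prod_rotheDiagram w (isLowerSet_rotheDiagram_of_isDominant hw)
  refine ⟨hGw, congrArg card hw, hw ▸ card_rotheDiagram w, ?_⟩
  rw [hGw, totalDegree_prod_X, card_rotheDiagram]
end

section
/- Let w ∈ S_n be a non-identity permutation with last descent g, let m > g be the largest index with w(m) < w(g), and set w' = w t_{g↔m}. Then (g, w(m)) is an element of the essential set E(w) that is maximally southeast in D(w), the Rothe diagram satisfies D(w') = D(w) \ {(g, w(m))}, and consequently λ(w') ⊊ λ(w). -/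
/-!
After its last descent `g` the permutation is increasing, so among the positions after `g` the
values below `w g` occupy exactly the block `(g, m]`, increasingly, and all later values exceed
`w g`. Hence no box of `D(w)` lies weakly southeast of `(g, w m)` except itself, which makes it
an essential box, and swapping the values in positions `g` and `m` destroys exactly this box.
Since `λ(w)` is the northwest closure of `D(w)`, removing a maximal box strictly shrinks it.
-/

open MvPolynomial

open Equiv

theorem mk_apply_mem_rotheDiagram {n : ℕ} (w : Perm (Fin n)) (i p : Fin n) :
    (i, w p) ∈ rotheDiagram w ↔ i < p ∧ w p < w i := by
  simp [rotheDiagram, and_comm]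

theorem mk_apply_mem_rotheDiagram_mul {n : ℕ} (w σ : Perm (Fin n)) (i p : Fin n) :
    (i, w p) ∈ rotheDiagram (w * σ) ↔ i < σ⁻¹ p ∧ w p < w (σ i) := by
  simpa using mk_apply_mem_rotheDiagram (w * σ) i (σ⁻¹ p)

theorem mem_essentialSet_of_maximal {n : ℕ} {w : Perm (Fin n)} {q : Fin n × Fin n}
    (hq : Maximal (· ∈ rotheDiagram w) q) : q ∈ essentialSet w := by
  refine Finset.mem_filter.2 ⟨hq.prop, ?_, ?_⟩
  · rintro r hr ⟨h1, h2⟩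
    have := (hq.2 hr ⟨h1.ge, by omega⟩).2
    omega
  · rintro r hr ⟨h1, h2⟩
    have := (hq.2 hr ⟨by omega, h2.ge⟩).1
    omega

theorem mem_effRegion_iff {n : ℕ} (w : Perm (Fin n)) (p : Fin n × Fin n) :
    p ∈ effRegion w ↔ ∃ q ∈ rotheDiagram w, p ≤ q := by
  simp only [effRegion, Finset.mem_filter, Finset.mem_univ, true_and]
  constructor
  · rintro ⟨q, hq, hpq⟩
    exact ⟨q, Finset.filter_subset _ _ hq, hpq⟩
  · rintro ⟨q, hq, hpq⟩
    obtain ⟨e, hqe, he⟩ := Finset.exists_le_maximal _ hq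
    exact ⟨e, mem_essentialSet_of_maximal he, hpq.trans hqe⟩

theorem effRegion_subset_of_rotheDiagram_subset {n : ℕ} {w w' : Perm (Fin n)}
    (hD : rotheDiagram w' ⊆ rotheDiagram w) : effRegion w' ⊆ effRegion w := fun p hp => by
  obtain ⟨q, hq, hpq⟩ := (mem_effRegion_iff w' p).1 hp
  exact (mem_effRegion_iff w p).2 ⟨q, hD hq, hpq⟩

theorem effRegion_ssubset_of_rotheDiagram_eq_erase {n : ℕ} {w w' : Perm (Fin n)}
    {q : Fin n × Fin n} (hD : rotheDiagram w' = (rotheDiagram w).erase q)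
    (hq : Maximal (· ∈ rotheDiagram w) q) : effRegion w' ⊂ effRegion w := by
  have hsub := effRegion_subset_of_rotheDiagram_subset (hD ▸ Finset.erase_subset q _)
  refine (Finset.ssubset_iff_of_subset hsub).2
    ⟨q, (mem_effRegion_iff w q).2 ⟨q, hq.prop, le_rfl⟩, fun hq' => ?_⟩
  obtain ⟨r, hr, hqr⟩ := (mem_effRegion_iff w' q).1 hq'
  rw [hD, Finset.mem_erase] at hr
  exact hr.1 (le_antisymm (hq.2 hr.2 hqr) hqr)

theorem strictMonoOn_Ioi_of_forall_descent_le {n : ℕ} {α : Type*} [LinearOrder α]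
    {f : Fin n → α} (hf : Function.Injective f) {g : Fin n}
    (hg : ∀ (j : Fin n) (hj : (j : ℕ) + 1 < n), f ⟨(j : ℕ) + 1, hj⟩ < f j → j ≤ g) :
    StrictMonoOn f (Set.Ioi g) := by
  refine strictMonoOn_of_lt_succ Set.ordConnected_Ioi fun a ha hga _ => ?_
  have hsucc : (a : ℕ) + 1 = Order.succ a :=
    Nat.covBy_iff_add_one_eq.1 (Fin.covBy_iff.1 (Order.covBy_succ_of_not_isMax ha))
  have hne : f a ≠ f (Order.succ a) := hf.ne (Order.lt_succ_of_not_isMax ha).ne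
  refine lt_of_le_of_ne (not_lt.1 fun hdesc => ?_) hne
  refine (hg a (hsucc ▸ (Order.succ a).isLt) ?_).not_gt hga
  convert hdesc

section LastDescent

variable {n : ℕ} {w : Perm (Fin n)} {g m : Fin n}

theorem maximal_mk_apply_mem_rotheDiagram (hmono : StrictMonoOn w (Set.Ioi g)) (hgm : g < m)
    (hwm : w m < w g) (hmmax : ∀ m' : Fin n, g < m' → w m' < w g → m' ≤ m) :
    Maximal (· ∈ rotheDiagram w) (g, w m) := by
  refine ⟨(mk_apply_mem_rotheDiagram w g m).2 ⟨hgm, hwm⟩, ?_⟩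
  rintro ⟨i, j⟩ hq ⟨hgi, -⟩
  obtain ⟨p, rfl⟩ := w.surjective j
  obtain ⟨hip, hpi⟩ := (mk_apply_mem_rotheDiagram w i p).1 hq
  obtain rfl : i = g :=
    le_antisymm (not_lt.1 fun hgi' => (hmono hgi' (hgi'.trans hip) hip).not_gt hpi) hgi
  exact ⟨le_rfl, hmono.monotoneOn hip (hgm : m ∈ Set.Ioi i) (hmmax p hip hpi)⟩

theorem rotheDiagram_mul_swap (hmono : StrictMonoOn w (Set.Ioi g)) (hgm : g < m)
    (hwm : w m < w g) (hmmax : ∀ m' : Fin n, g < m' → w m' < w g → m' ≤ m) :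
    rotheDiagram (w * swap g m) = (rotheDiagram w).erase (g, w m) := by
  ext ⟨i, j⟩
  obtain ⟨p, rfl⟩ := w.surjective j
  rw [mk_apply_mem_rotheDiagram_mul, Finset.mem_erase, mk_apply_mem_rotheDiagram, swap_inv, Ne,
    Prod.mk.injEq, w.injective.eq_iff]
  have hlt : ∀ a b, g < a → a < b → w a < w b := fun a b ha hab =>
    hmono ha (ha.trans hab) hab
  have hbelow : ∀ p, g < p → (w p < w g ↔ p ≤ m) := fun p hp =>
    ⟨hmmax p hp, fun hpm => hpm.lt_or_eq.elim (fun h => (hlt p m hp h).trans hwm) (· ▸ hwm)⟩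
  -- each of the cases `i, p ∈ {g, m, other}` is a consequence of `hlt` and `hbelow`
  rw [swap_apply_def, swap_apply_def]
  split_ifs <;> grind

end LastDescent

theorem transition_diagram_general (n : ℕ) (w : Equiv.Perm (Fin n))
    (g m : Fin n)
    (hglast : ∀ (j : Fin n) (hj : (j : ℕ) + 1 < n), w ⟨(j : ℕ) + 1, hj⟩ < w j → j ≤ g)
    (hgm : g < m) (hwm : w m < w g)
    (hmmax : ∀ m' : Fin n, g < m' → w m' < w g → m' ≤ m) :
    (g, w m) ∈ essentialSet w ∧
    (∀ q ∈ rotheDiagram w, g ≤ q.1 → w m ≤ q.2 → q = (g, w m)) ∧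
    rotheDiagram (w * Equiv.swap g m) = (rotheDiagram w).erase (g, w m) ∧
    effRegion (w * Equiv.swap g m) ⊂ effRegion w := by
  have hmono := strictMonoOn_Ioi_of_forall_descent_le w.injective hglast
  have hmax := maximal_mk_apply_mem_rotheDiagram hmono hgm hwm hmmax
  have hD := rotheDiagram_mul_swap hmono hgm hwm hmmax
  exact ⟨mem_essentialSet_of_maximal hmax,
    fun q hq h1 h2 => le_antisymm (hmax.2 hq ⟨h1, h2⟩) ⟨h1, h2⟩, hD,
    effRegion_ssubset_of_rotheDiagram_eq_erase hD hmax⟩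

/-- Transition step (from the proof of Proposition 4.1): if `w ≠ 1` has last descent
`g`, and `m > g` is the largest index with `w(m) < w(g)`, then for `w' = w t_{g↔m}`:
`(g, w(m))` is an element of `E(w)` that is maximally southeast in `D(w)`,
`D(w') = D(w) \ {(g, w(m))}`, and consequently `λ(w') ⊊ λ(w)`. -/
theorem transition_diagram (n : ℕ) (w : Equiv.Perm (Fin n)) (hw : w ≠ 1)
    (g m : Fin n) (hg1 : (g : ℕ) + 1 < n)
    (hgdesc : w ⟨(g : ℕ) + 1, hg1⟩ < w g)
    (hglast : ∀ (j : Fin n) (hj : (j : ℕ) + 1 < n), w ⟨(j : ℕ) + 1, hj⟩ < w j → j ≤ g)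
    (hgm : g < m) (hwm : w m < w g)
    (hmmax : ∀ m' : Fin n, g < m' → w m' < w g → m' ≤ m) :
    (g, w m) ∈ essentialSet w ∧
    (∀ q ∈ rotheDiagram w, g ≤ q.1 → w m ≤ q.2 → q = (g, w m)) ∧
    rotheDiagram (w * Equiv.swap g m) = (rotheDiagram w).erase (g, w m) ∧
    effRegion (w * Equiv.swap g m) ⊂ effRegion w :=
  transition_diagram_general n w g m hglast hgm hwm hmmax
end

section
/- If w ∈ S_n is a dominant permutation, then the Schubert determinantal ideal is generated by the variables indexed by the effective region: I_w = ⟨z_ij : (i,j) ∈ λ(w)⟩ in C[z_ij : 1 ≤ i,j ≤ n]. -/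
open MvPolynomial

/-- `r_{ij}(w)` (0-based): the number of `k ≤ i` with `w k ≤ j`. -/
def rankNW {n : ℕ} (w : Equiv.Perm (Fin n)) (i j : Fin n) : ℕ :=
  (Finset.univ.filter fun k : Fin n => k ≤ i ∧ w k ≤ j).card

/-- The Schubert determinantal ideal `I_w ⊆ ℂ[z_{ij}]`: generated by all
`(r_{ij}+1) × (r_{ij}+1)` minors of the northwest submatrices of the generic matrix. -/
noncomputable def schubertIdeal {n : ℕ} (w : Equiv.Perm (Fin n)) :
    Ideal (MvPolynomial (Fin n × Fin n) ℂ) :=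
  Ideal.span { f | ∃ (i j : Fin n) (rows cols : Fin (rankNW w i j + 1) → Fin n),
    StrictMono rows ∧ StrictMono cols ∧ (∀ a, rows a ≤ i) ∧ (∀ a, cols a ≤ j) ∧
    f = (Matrix.of fun a b => (X (rows a, cols b) : MvPolynomial (Fin n × Fin n) ℂ)).det }

/-! For dominant `w` the Rothe diagram `D(w)` is the Young diagram `λ(w)` in the northwest
corner. A box `(i, j)` of it has `r_ij = 0`, so `z_ij` is itself a `1 × 1` generator of `I_w`.
Conversely, a term of an `(r_ij + 1)`-minor of the northwest `i × j` block is the product of the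
variables on a rook placement of size `r_ij + 1`, and a rook placement avoiding `D(w)` in a
northwest rectangle has at most as many rooks as the rectangle has dots of `w`. This is proved by
induction on the number of rows: a rook in the last row lies either weakly east of that row's
dot, or (the rows of `D(w)` being left-justified) west of it, and then every column from the rook
to the east edge of the rectangle has its dot higher up. So every term involves a variable of
`λ(w)`. -/

open Finset

section RookBound

variable {n : ℕ} (w : Equiv.Perm (Fin n))

/-- The number of dots of `w` in rows `< t` and columns `< c`; the bounds are natural numbers so
that empty rectangles are allowed. -/
def rankLT (t c : ℕ) : ℕ :=
  #{x : Fin n | (x : ℕ) < c ∧ (w⁻¹ x : ℕ) < t}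

def HasLeftJustifiedRows : Prop :=
  ∀ a b b' : Fin n, b ≤ b' → (a, b') ∈ rotheDiagram w → (a, b) ∈ rotheDiagram w

variable {w}

theorem rankNW_eq_rankLT (i j : Fin n) : rankNW w i j = rankLT w (i + 1) (j + 1) := by
  refine card_equiv w fun k => ?_
  simp only [mem_filter, mem_univ, true_and, Equiv.Perm.coe_inv, Equiv.symm_apply_apply,
    Fin.le_def, Nat.lt_succ_iff]
  exact and_comm

theorem rankLT_mono_left {t t' : ℕ} (h : t ≤ t') (c : ℕ) : rankLT w t c ≤ rankLT w t' c :=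
  card_le_card <| monotone_filter_right _ fun _ _ hx => ⟨hx.1, hx.2.trans_le h⟩

theorem rankLT_add_one_le {a : Fin n} {c : ℕ} (ha : (w a : ℕ) < c) :
    rankLT w a c + 1 ≤ rankLT w (a + 1) c := by
  have hnot : w a ∉ ({x : Fin n | (x : ℕ) < c ∧ (w⁻¹ x : ℕ) < a} : Finset _) := by simp
  rw [rankLT, ← card_insert_of_notMem hnot]
  refine card_le_card fun x hx => ?_
  rcases mem_insert.mp hx with rfl | hx
  · simp [ha]
  · simp only [mem_filter, mem_univ, true_and] at hx ⊢
    omega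

theorem HasLeftJustifiedRows.inv_lt_of_notMem (hD : HasLeftJustifiedRows w) {a b x : Fin n}
    (hab : (a, b) ∉ rotheDiagram w) (hbx : b ≤ x) (hxa : x < w a) : w⁻¹ x < a := by
  have hne : w⁻¹ x ≠ a := fun h => hxa.ne <| by
    rw [← h, Equiv.Perm.coe_inv, Equiv.apply_symm_apply]
  have hax := mt (hD a b x hbx) hab
  simp only [rotheDiagram, mem_filter, mem_univ, true_and, not_and, not_lt] at hax
  exact lt_of_le_of_ne (hax hxa) hne

theorem card_le_rankLT (hD : HasLeftJustifiedRows w) (t c : ℕ) (S : Finset (Fin n × Fin n))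
    (hrow : Set.InjOn Prod.fst (S : Set (Fin n × Fin n)))
    (hcol : Set.InjOn Prod.snd (S : Set (Fin n × Fin n)))
    (hS : ∀ p ∈ S, (p.1 : ℕ) < t ∧ (p.2 : ℕ) < c ∧ p ∉ rotheDiagram w) :
    #S ≤ rankLT w t c := by
  induction t generalizing c S with
  | zero =>
    simp [eq_empty_of_forall_notMem fun p hp => Nat.not_lt_zero _ (hS p hp).1]
  | succ t ih =>
  by_cases hlast : ∃ p ∈ S, (p.1 : ℕ) = t
  swap
  · refine (ih c S hrow hcol fun p hp => ?_).trans (rankLT_mono_left t.le_succ c)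
    obtain ⟨hpt, hp'⟩ := hS p hp
    have hpt' : (p.1 : ℕ) ≠ t := fun h => hlast ⟨p, hp, h⟩
    exact ⟨by omega, hp'⟩
  obtain ⟨⟨a, b⟩, hab, hat⟩ := hlast
  dsimp only at hat
  subst hat
  have habove : ∀ q ∈ S, q ≠ (a, b) → (q.1 : ℕ) < a := fun q hq hne => by
    have : q.1 ≠ a := fun h => hne (hrow hq hab h)
    have := (hS q hq).1
    omega
  obtain ⟨-, hbc, habD⟩ : _ ∧ (b : ℕ) < c ∧ _ := hS _ hab
  by_cases hwa : (w a : ℕ) < c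
  · calc #S = #(S.erase (a, b)) + 1 := (card_erase_add_one hab).symm
      _ ≤ rankLT w a c + 1 := by
        gcongr
        refine ih c _ (hrow.mono (erase_subset _ _)) (hcol.mono (erase_subset _ _))
          fun q hq => ?_
        exact ⟨habove q (mem_of_mem_erase hq) (ne_of_mem_erase hq),
          (hS q (mem_of_mem_erase hq)).2⟩
      _ ≤ rankLT w (a + 1) c := rankLT_add_one_le hwa
  have hdot : ∀ x : Fin n, b ≤ x → (x : ℕ) < c → (w⁻¹ x : ℕ) < a := fun x hbx hxc =>
    hD.inv_lt_of_notMem habD hbx (Fin.lt_def.mpr (by omega))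
  set s : Finset (Fin n) := {x | (x : ℕ) < c ∧ (w⁻¹ x : ℕ) < a}
  have hleft : #(S.filter fun p => p.2 < b) ≤ #(s.filter fun x => x < b) := by
    refine (ih b _ (hrow.mono (filter_subset _ _)) (hcol.mono (filter_subset _ _))
      fun q hq => ?_).trans (card_le_card fun x hx => ?_)
    · obtain ⟨hqS, hqb⟩ := mem_filter.mp hq
      exact ⟨habove q hqS (by rintro rfl; exact hqb.false), hqb, (hS q hqS).2.2⟩
    · simp only [s, mem_filter, mem_univ, true_and, Fin.lt_def] at hx ⊢
      omega
  have hright : #(S.filter fun p => ¬p.2 < b) ≤ #(s.filter fun x => ¬x < b) := by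
    refine card_le_card_of_injOn Prod.snd (fun q hq => ?_) (hcol.mono (filter_subset _ _))
    obtain ⟨hqS, hqb⟩ := mem_filter.mp hq
    have hqc := (hS q hqS).2.1
    simp only [s, mem_filter, mem_univ, true_and, coe_filter, Set.mem_ofPred_eq]
    exact ⟨⟨hqc, hdot q.2 (not_lt.mp hqb) hqc⟩, hqb⟩
  calc #S = #(S.filter fun p => p.2 < b) + #(S.filter fun p => ¬p.2 < b) :=
        (card_filter_add_card_filter_not _).symm
    _ ≤ #s := by rw [← card_filter_add_card_filter_not (s := s) fun x => x < b]; gcongr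
    _ ≤ rankLT w (a + 1) c := rankLT_mono_left a.val.le_succ c

theorem exists_mem_rotheDiagram_of_rankNW_lt (hD : HasLeftJustifiedRows w) {ι : Type*}
    [Fintype ι] {f : ι → Fin n × Fin n} (hrow : Function.Injective (Prod.fst ∘ f))
    (hcol : Function.Injective (Prod.snd ∘ f)) {i j : Fin n}
    (hf : ∀ x, (f x).1 ≤ i ∧ (f x).2 ≤ j)
    (hcard : rankNW w i j < Fintype.card ι) : ∃ x, f x ∈ rotheDiagram w := by
  by_contra! hf'
  have hinj : Function.Injective f := .of_comp hrow
  have hle := card_le_rankLT hD (i + 1) (j + 1) (univ.image f)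
    (by simpa [Set.InjOn] using fun a b h => congrArg f (hrow h))
    (by simpa [Set.InjOn] using fun a b h => congrArg f (hcol h))
    (by simpa [Nat.lt_succ_iff, ← Fin.le_def] using fun x => ⟨(hf x).1, (hf x).2, hf' x⟩)
  rw [card_image_of_injective _ hinj, card_univ, ← rankNW_eq_rankLT] at hle
  exact hle.not_gt hcard

end RookBound

section Dominant

variable {n : ℕ} {w : Equiv.Perm (Fin n)}

theorem IsDominant.mem_rotheDiagram_of_le (hw : IsDominant w) {p q : Fin n × Fin n}
    (hq : q ∈ rotheDiagram w) (h₁ : p.1 ≤ q.1) (h₂ : p.2 ≤ q.2) : p ∈ rotheDiagram w := by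
  rw [hw] at hq ⊢
  simp only [effRegion, mem_filter, mem_univ, true_and] at hq ⊢
  obtain ⟨e, he, h₃, h₄⟩ := hq
  exact ⟨e, he, h₁.trans h₃, h₂.trans h₄⟩

theorem IsDominant.hasLeftJustifiedRows (hw : IsDominant w) : HasLeftJustifiedRows w :=
  fun _ _ _ hb h => hw.mem_rotheDiagram_of_le h le_rfl hb

theorem IsDominant.rankNW_eq_zero (hw : IsDominant w) {i j : Fin n}
    (h : (i, j) ∈ rotheDiagram w) : rankNW w i j = 0 := by
  refine card_eq_zero.mpr <| filter_eq_empty_iff.mpr fun k _ ⟨hki, hkj⟩ => ?_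
  have hkD : (k, j) ∈ rotheDiagram w := hw.mem_rotheDiagram_of_le h hki le_rfl
  simp only [rotheDiagram, mem_filter, mem_univ, true_and] at hkD
  exact hkj.not_gt hkD.1

end Dominant

theorem MvPolynomial.det_of_X_mem_span_X_image {ι σ R : Type*} [Fintype ι] [DecidableEq ι]
    [CommRing R] (g : ι → ι → σ) (s : Set σ) (h : ∀ τ : Equiv.Perm ι, ∃ x, g (τ x) x ∈ s) :
    (Matrix.of fun a b => (X (g a b) : MvPolynomial σ R)).det ∈ Ideal.span (X '' s) := by
  rw [Matrix.det_apply]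
  refine Ideal.sum_mem _ fun τ _ => Submodule.smul_of_tower_mem _ _ ?_
  obtain ⟨x, hx⟩ := h τ
  exact Ideal.mem_of_dvd _ (dvd_prod_of_mem _ (mem_univ x)) (Ideal.subset_span ⟨_, hx, rfl⟩)

theorem X_mem_schubertIdeal_of_rankNW_eq_zero {n : ℕ} {w : Equiv.Perm (Fin n)} {i j : Fin n}
    (h : rankNW w i j = 0) : X (i, j) ∈ schubertIdeal w := by
  have : Unique (Fin (rankNW w i j + 1)) := h ▸ (inferInstance : Unique (Fin 1))
  refine Ideal.subset_span ⟨i, j, fun _ => i, fun _ => j, Subsingleton.strictMono _,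
    Subsingleton.strictMono _, fun _ => le_rfl, fun _ => le_rfl, ?_⟩
  rw [Matrix.det_unique, Matrix.of_apply]

/-- If `w` is dominant, then the Schubert determinantal ideal is generated by the
variables indexed by the effective region: `I_w = ⟨z_{ij} : (i,j) ∈ λ(w)⟩`. -/
theorem schubertIdeal_of_dominant (n : ℕ) (w : Equiv.Perm (Fin n)) (hw : IsDominant w) :
    schubertIdeal w =
      Ideal.span (MvPolynomial.X '' {p : Fin n × Fin n | p ∈ effRegion w}) := by
  refine le_antisymm (Ideal.span_le.mpr ?_) (Ideal.span_le.mpr ?_)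
  · rintro _ ⟨i, j, rows, cols, hrows, hcols, hri, hcj, rfl⟩
    refine det_of_X_mem_span_X_image _ _ fun τ => ?_
    obtain ⟨x, hx⟩ := exists_mem_rotheDiagram_of_rankNW_lt hw.hasLeftJustifiedRows
      (f := fun x => (rows (τ x), cols x)) (hrows.injective.comp τ.injective) hcols.injective
      (fun x => ⟨hri _, hcj _⟩) (by simp)
    exact ⟨x, show _ ∈ effRegion w from hw ▸ hx⟩
  · rintro _ ⟨⟨i, j⟩, hp, rfl⟩
    exact X_mem_schubertIdeal_of_rankNW_eq_zero <| hw.rankNW_eq_zero <| hw.symm ▸ hp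
end
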